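/- Let B and C be bicategories and F, G : B ⥤ C pseudofunctors. Suppose given, for every object X of B, a 1-morphism app X : F.obj X ⟶ G.obj X in C, and, for every 1-morphism f : X ⟶ Y in B, an invertible 2-morphism nat f : F.map f ≫ app Y ≅ app X ≫ G.map f, satisfying: (i) (2-naturality) for every 2-morphism η : f ⟶ g in B, (F.map₂ η ▷ app Y) ≫ (nat g).hom = (nat f).hom ≫ (app X ◁ G.map₂ η); and (ii) (compatibility with composition) for all composable 1-morphisms f : X ⟶ Y and g : Y ⟶ Z, (nat (f ≫ g)).hom equals the pasting composite ((F.mapComp f g).hom ▷ app Z) ≫ (α_).hom ≫ (F.map f ◁ (nat g).hom) ≫ (α_).inv ≫ ((nat f).hom ▷ G.map g) ≫ (α_).hom ≫ (app X ◁ (G.mapComp f g).inv). Then the identity-coherence axiom holds automatically: for every object X of B, (nat (𝟙 X)).hom = ((F.mapId X).hom ▷ app X) ≫ (λ_ (app X)).hom ≫ (ρ_ (app X)).inv ≫ (app X ◁ (G.mapId X).inv). In other words, the naturality-at-identities axiom of a strong (pseudonatural) transformation between pseudofunctors is implied by the other two axioms when all naturality 2-cells are invertible. -/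

import Mathlib

/-!
Whiskering by a 1-cell `e ≅ 𝟙` is conjugation by that isomorphism and a unitor. Applying this to
naturality along `λ_ (𝟙 X)`, expanded by compatibility with composition, the naturality cell
`N := nat (𝟙 X)` satisfies `N = N ≫ K ≫ N` for an invertible structural 2-cell `K` built from the
unit constraints. Cancelling `N` gives `N = K⁻¹`, and `K⁻¹` is the required composite.
-/

namespace CategoryTheory.Bicategory

variable {B : Type*} [Bicategory B] {x y : B}

theorem whiskerLeft_eq_of_iso_id {e : x ⟶ x} (u : e ≅ 𝟙 x) {f g : x ⟶ y} (η : f ⟶ g) :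
    e ◁ η = u.hom ▷ f ≫ (λ_ f).hom ≫ η ≫ (λ_ g).inv ≫ u.inv ▷ g := by
  rw [← id_whiskerLeft_assoc, ← whisker_exchange_assoc, hom_inv_whiskerRight, Category.comp_id]

theorem whiskerRight_eq_of_iso_id {e : y ⟶ y} (v : e ≅ 𝟙 y) {f g : x ⟶ y} (η : f ⟶ g) :
    η ▷ e = f ◁ v.hom ≫ (ρ_ f).hom ≫ η ≫ (ρ_ g).inv ≫ g ◁ v.inv := by
  rw [← whiskerRight_id_assoc, whisker_exchange_assoc, whiskerLeft_hom_inv, Category.comp_id]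

theorem whiskerRight_leftUnitor_eq_of_iso_id {e : x ⟶ x} (v : e ≅ 𝟙 x) :
    v.hom ▷ e ≫ (λ_ e).hom = e ◁ v.hom ≫ (ρ_ e).hom := by
  rw [← cancel_mono v.hom, Category.assoc, Category.assoc, ← leftUnitor_naturality,
    ← rightUnitor_naturality, unitors_equal, whisker_exchange_assoc]

theorem iso_hom_eq_of_unit_compat {e : x ⟶ x} {e' : y ⟶ y} (u : e ≅ 𝟙 x) (v : e' ≅ 𝟙 y)
    {a : x ⟶ y} (N : e ≫ a ≅ a ≫ e')
    (h : (u.hom ▷ e ≫ (λ_ e).hom) ▷ a ≫ N.hom =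
      (α_ e e a).hom ≫ e ◁ N.hom ≫ (α_ e a e').inv ≫ N.hom ▷ e' ≫ (α_ a e' e').hom ≫
        a ◁ (v.hom ▷ e' ≫ (λ_ e').hom)) :
    N.hom = u.hom ▷ a ≫ (λ_ a).hom ≫ (ρ_ a).inv ≫ a ◁ v.inv := by
  let K : a ≫ e' ≅ e ≫ a := (λ_ _).symm ≪≫ whiskerRightIso u.symm _ ≪≫ (α_ _ _ _).symm ≪≫
    whiskerLeftIso _ v ≪≫ ρ_ _
  rw [whiskerRight_leftUnitor_eq_of_iso_id v, whiskerLeft_eq_of_iso_id u N.hom,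
    whiskerRight_eq_of_iso_id v N.hom] at h
  have idem : N.hom ≫ K.hom ≫ N.hom = N.hom := by
    rw [← cancel_epi ((u.hom ▷ e ≫ (λ_ e).hom) ▷ a), h]
    simp [K]
  have hN : N.hom = K.inv := by
    rw [← Iso.comp_hom_eq_id, ← cancel_mono N.hom, Category.assoc, idem, Category.id_comp]
  calc N.hom
      = (ρ_ _).inv ≫ (α_ _ _ _).hom ≫ (e ◁ a ◁ v.inv ≫ u.hom ▷ (a ≫ e')) ≫ (λ_ _).hom := by
        rw [hN]; simp [K]
    _ = (ρ_ _).inv ≫ (α_ _ _ _).hom ≫ (u.hom ▷ (a ≫ 𝟙 y) ≫ 𝟙 x ◁ a ◁ v.inv) ≫ (λ_ _).hom := by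
        rw [whisker_exchange]
    _ = u.hom ▷ a ≫ (λ_ a).hom ≫ (ρ_ a).inv ≫ a ◁ v.inv := by bicategory

end CategoryTheory.Bicategory

open CategoryTheory Bicategory

/-- The identity-coherence axiom of a pseudonatural transformation between
pseudofunctors follows from 2-naturality and compatibility with composition, when
all naturality 2-cells are invertible. -/
theorem pseudonatural_id_coherence {B C : Type*} [Bicategory B] [Bicategory C]
    (F G : Pseudofunctor B C)
    (app : ∀ X : B, F.obj X ⟶ G.obj X)
    (nat : ∀ {X Y : B} (f : X ⟶ Y), F.map f ≫ app Y ≅ app X ≫ G.map f)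
    (hnat : ∀ {X Y : B} {f g : X ⟶ Y} (η : f ⟶ g),
      (F.map₂ η ▷ app Y) ≫ (nat g).hom = (nat f).hom ≫ (app X ◁ G.map₂ η))
    (hcomp : ∀ {X Y Z : B} (f : X ⟶ Y) (g : Y ⟶ Z),
      (nat (f ≫ g)).hom =
        ((F.mapComp f g).hom ▷ app Z) ≫ (α_ (F.map f) (F.map g) (app Z)).hom ≫
          (F.map f ◁ (nat g).hom) ≫ (α_ (F.map f) (app Y) (G.map g)).inv ≫
          ((nat f).hom ▷ G.map g) ≫ (α_ (app X) (G.map f) (G.map g)).hom ≫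
          (app X ◁ (G.mapComp f g).inv)) :
    ∀ X : B,
      (nat (𝟙 X)).hom =
        ((F.mapId X).hom ▷ app X) ≫ (λ_ (app X)).hom ≫ (ρ_ (app X)).inv ≫
          (app X ◁ (G.mapId X).inv) := by
  intro X
  apply iso_hom_eq_of_unit_compat (F.mapId X) (G.mapId X)
  have h := hnat (λ_ (𝟙 X)).hom
  rw [hcomp, F.map₂_left_unitor, G.map₂_left_unitor] at h
  rw [← cancel_epi ((F.mapComp (𝟙 X) (𝟙 X)).hom ▷ app X)]
  simpa using h
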